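/- arXiv:2406.00398 — 3 statements merged into one kernel-verified Lean document; each statement's English description precedes it below -/
import Mathlib

section
/- Let H : ℂⁿ → ℝ be Fréchet differentiable (over ℝ) and phase invariant, and let ∇H denote its gradient with respect to the real inner product ⟨z,w⟩ = Re(Σ_k conj(z_k) w_k) on ℂⁿ. If b : ℝ → ℂⁿ is differentiable and satisfies the Hamiltonian equations ḃ(t) = −i·∇H(b(t)) (equivalently ḃ_k = −2i ∂H/∂conj(b_k)) for all t, then the total mass M(t) = ‖b(t)‖² = Σ_k |b_k(t)|² is constant in t, i.e. M is a first integral of the motion. -/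
/-!
Differentiating the phase invariance `H (exp (iθ) • z) = H z` at `θ = 0` gives
`Re ⟪∇H z, i • z⟫ = 0`, i.e. the gradient is orthogonal to the phase direction `i • z`.
Along a solution, `d/dt ‖b‖² = 2 Re ⟪b, -i • ∇H b⟫ = 2 Re ⟪∇H b, i • b⟫`, which therefore vanishes.
-/

open Complex
open scoped ComplexInnerProductSpace

section Phase

variable {E : Type*} [NormedAddCommGroup E] [NormedSpace ℂ E]

theorem hasDerivAt_exp_ofReal_mul_I_smul_zero (z : E) :
    HasDerivAt (fun θ : ℝ => cexp (θ * I) • z) (I • z) 0 := by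
  have hphase : HasDerivAt (fun θ : ℝ => cexp (θ * I)) I 0 := by
    simpa using ((hasDerivAt_id (0 : ℝ)).ofReal_comp.mul_const I).cexp
  simpa using hphase.smul_const z

theorem fderiv_apply_I_smul_self_eq_zero {f : E → ℝ}
    (hf : ∀ (θ : ℝ) z, f (cexp (θ * I) • z) = f z) (z : E) :
    fderiv ℝ f z (I • z) = 0 := by
  by_cases hdiff : DifferentiableAt ℝ f z
  · have hcomp := hdiff.hasFDerivAt.comp_hasDerivAt_of_eq 0
      (hasDerivAt_exp_ofReal_mul_I_smul_zero z) (by simp)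
    simp only [Function.comp_def, hf] at hcomp
    exact hcomp.unique (hasDerivAt_const 0 (f z))
  · simp [fderiv_zero_of_not_differentiableAt hdiff]

end Phase

theorem re_inner_neg_I_smul {E : Type*} [NormedAddCommGroup E] [InnerProductSpace ℂ E]
    (x y : E) : re ⟪x, -I • y⟫ = re ⟪y, I • x⟫ := by
  simp [inner_smul_right, ← Complex.conj_im ⟪y, x⟫]

theorem norm_sq_eq_of_inner_deriv_eq_zero {F : Type*} [NormedAddCommGroup F]
    [InnerProductSpace ℝ F] {b : ℝ → F} (hb : Differentiable ℝ b)
    (horth : ∀ t, inner ℝ (b t) (deriv b t) = 0) (t s : ℝ) :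
    ‖b t‖ ^ 2 = ‖b s‖ ^ 2 := by
  have hderiv (t : ℝ) : HasDerivAt (‖b ·‖ ^ 2) 0 t := by
    simpa [horth] using (hb t).hasDerivAt.norm_sq
  exact is_const_of_deriv_eq_zero (fun t => (hderiv t).differentiableAt)
    (fun t => (hderiv t).deriv) t s

open scoped ComplexInnerProductSpace in
theorem mass_is_first_integral_general
    (n : ℕ) (H : EuclideanSpace ℂ (Fin n) → ℝ)
    (hinv : ∀ (θ : ℝ) (b : EuclideanSpace ℂ (Fin n)),
      H (Complex.exp (θ * Complex.I) • b) = H b)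
    (grad : EuclideanSpace ℂ (Fin n) → EuclideanSpace ℂ (Fin n))
    (hgrad : ∀ (b h : EuclideanSpace ℂ (Fin n)),
      fderiv ℝ H b h = (inner ℂ (grad b) h : ℂ).re)
    (b : ℝ → EuclideanSpace ℂ (Fin n))
    (hb : Differentiable ℝ b)
    (heq : ∀ t : ℝ, deriv b t = (-Complex.I) • grad (b t)) :
    ∀ t s : ℝ, ‖b t‖ ^ 2 = ‖b s‖ ^ 2 := by
  let := InnerProductSpace.complexToReal (G := EuclideanSpace ℂ (Fin n))
  refine norm_sq_eq_of_inner_deriv_eq_zero hb fun t => ?_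
  rw [heq, real_inner_eq_re_inner, RCLike.re_to_complex, re_inner_neg_I_smul, ← hgrad,
    fderiv_apply_I_smul_self_eq_zero hinv]

open scoped ComplexInnerProductSpace in
/-- For a phase-invariant differentiable Hamiltonian `H` on `ℂⁿ`,
solutions of `ḃ = −i·∇H(b)` (gradient w.r.t. the real inner product
`⟨z,w⟩ = Re Σ conj(z_k) w_k`) conserve the total mass `M = ‖b‖²`. -/
theorem mass_is_first_integral
    (n : ℕ) (H : EuclideanSpace ℂ (Fin n) → ℝ)
    (hH : Differentiable ℝ H)
    (hinv : ∀ (θ : ℝ) (b : EuclideanSpace ℂ (Fin n)),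
      H (Complex.exp (θ * Complex.I) • b) = H b)
    (grad : EuclideanSpace ℂ (Fin n) → EuclideanSpace ℂ (Fin n))
    (hgrad : ∀ (b h : EuclideanSpace ℂ (Fin n)),
      fderiv ℝ H b h = (inner ℂ (grad b) h : ℂ).re)
    (b : ℝ → EuclideanSpace ℂ (Fin n))
    (hb : Differentiable ℝ b)
    (heq : ∀ t : ℝ, deriv b t = (-Complex.I) • grad (b t)) :
    ∀ t s : ℝ, ‖b t‖ ^ 2 = ‖b s‖ ^ 2 :=
  mass_is_first_integral_general n H hinv grad hgrad b hb heq
end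

section
/- Let α ∈ ℝ and a ∈ ℂ with |a| > |α|, set λ = √(|a|² − α²) > 0, and let ω ∈ ℂ satisfy ω² = i·conj(a)/(λ + iα). Then |ω| = 1 and −i(αω − conj(a)·conj(ω)) = λω; i.e. ω is an eigenvector of the ℝ-linear map L : ℂ → ℂ, L(c) = −i(αc − conj(a)·conj(c)), with eigenvalue λ. -/
/-! Put `d = λ + iα`. Then `|d|² = λ² + α² = |a|²`, so `|ω|² = |ā| / |d| = 1` and `conj ω = ω⁻¹`.
Multiplying the eigenvalue equation by `ω` turns it into `i·ā = d·ω²`, which is the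
defining equation of `ω`. -/

open Complex ComplexConjugate

lemma norm_sqrt_sub_sq_add_mul_I {α : ℝ} {a : ℂ} (h : |α| < ‖a‖) :
    ‖(√(‖a‖ ^ 2 - α ^ 2) : ℂ) + α * I‖ = ‖a‖ := by
  have hsq : α ^ 2 < ‖a‖ ^ 2 := sq_lt_sq' (neg_lt_of_abs_lt h) (lt_of_abs_lt h)
  rw [norm_add_mul_I, Real.sq_sqrt (sub_nonneg.mpr hsq.le), sub_add_cancel,
    Real.sqrt_sq (norm_nonneg a)]

lemma norm_eq_one_of_sq_eq_div {K : Type*} [NormedDivisionRing K] {ω z w : K}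
    (hzw : ‖z‖ = ‖w‖) (hw : w ≠ 0) (hω : ω ^ 2 = z / w) :
    ‖ω‖ = 1 := by
  have : ‖ω‖ ^ 2 = 1 := by
    rw [← norm_pow, hω, norm_div, hzw, div_self (norm_ne_zero_iff.mpr hw)]
  exact (pow_eq_one_iff_of_nonneg (norm_nonneg ω) two_ne_zero).mp this

lemma neg_I_mul_sub_conj_eq_of_sq_mul {α lam : ℝ} {a ω : ℂ} (hω₁ : ‖ω‖ = 1)
    (hω : ω ^ 2 * (lam + α * I) = I * conj a) :
    -I * (α * ω - conj a * conj ω) = lam * ω := by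
  have hωω : ω * conj ω = 1 := by rw [mul_conj', hω₁]; simp
  linear_combination (-conj ω) * hω + (lam + α * I) * ω * hωω

/-- If `|a| > |α|`, `λ = √(|a|² − α²)` and `ω² = i·conj(a)/(λ + iα)`,
then `|ω| = 1` and `−i(αω − conj(a)·conj(ω)) = λω`, i.e. `ω` is an eigenvector of the
ℝ-linear map `L(c) = −i(αc − conj(a)·conj(c))` with eigenvalue `λ`. -/
theorem omega_is_unstable_eigenvector (α : ℝ) (a : ℂ)
    (h : ‖a‖ > |α|)
    (lam : ℝ) (hlam : lam = Real.sqrt (‖a‖ ^ 2 - α ^ 2))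
    (ω : ℂ) (hω : ω ^ 2 = Complex.I * (starRingEnd ℂ) a / (lam + α * Complex.I)) :
    ‖ω‖ = 1 ∧
    -Complex.I * (α * ω - (starRingEnd ℂ) a * (starRingEnd ℂ) ω) = lam * ω := by
  have hd : ‖(lam : ℂ) + α * I‖ = ‖a‖ := hlam ▸ norm_sqrt_sub_sq_add_mul_I h
  have hd₀ : (lam : ℂ) + α * I ≠ 0 := by
    rw [← norm_ne_zero_iff, hd]
    exact (abs_nonneg α).trans_lt h |>.ne'
  have hω₁ : ‖ω‖ = 1 := norm_eq_one_of_sq_eq_div (by simp [hd]) hd₀ hω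
  exact ⟨hω₁, neg_I_mul_sub_conj_eq_of_sq_mul hω₁ ((eq_div_iff hd₀).mp hω)⟩
end

section
/- Let H : ℝ² × ℝ² → ℝ be twice continuously differentiable, let J be the real 2×2 matrix [[0, −1], [−1, 0]], and define the Hamiltonian component vector fields g₋(z₋, z₊) = J·∇_{z₋}H(z₋, z₊) and g₊(z₋, z₊) = J·∇_{z₊}H(z₋, z₊). Suppose the plane {z₊ = 0} is invariant, i.e. g₊(z₋, 0) = 0 for all z₋ ∈ ℝ². Then for every z₋ ∈ ℝ² the partial derivative of g₋ with respect to z₊ vanishes at (z₋, 0): D_{z₊}g₋(z₋, 0) = 0. (Thus for Hamiltonian systems, invariance of the coordinate plane automatically yields the block diagonal structure of the variational equations along orbits contained in {z₊ = 0}.) -/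
/-!
Since `J` is invertible, invariance of the plane `{z₊ = 0}` says that `∂_{z₊}H` vanishes on it,
hence so does its derivative `∂_{z₋}∂_{z₊}H` along the plane. For `C²` functions the second
derivative is symmetric, so `∂_{z₊}∂_{z₋}H` vanishes there as well, and `D_{z₊}g₋` is this mixed
partial followed by the linear map `dH ↦ J ∇H`.
-/

open ContinuousLinearMap

section MixedPartials

variable {E F G : Type*} [NormedAddCommGroup E] [NormedSpace ℝ E] [NormedAddCommGroup F]
  [NormedSpace ℝ F] [NormedAddCommGroup G] [NormedSpace ℝ G] {H : E × F → G}

theorem ContDiff.hasFDerivAt_fderiv_fst_zero_of_fderiv_snd_eq_zero (hH : ContDiff ℝ 2 H)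
    {y₀ : F} (hsnd : ∀ x, fderiv ℝ (fun y => H (x, y)) y₀ = 0) (x : E) :
    HasFDerivAt (𝕜 := ℝ) (fun y => fderiv ℝ (fun x' => H (x', y)) x) 0 y₀ := by
  set D := fderiv ℝ (fderiv ℝ H)
  have hH' : ∀ p, HasFDerivAt (fderiv ℝ H) (D p) p := fun p =>
    ((hH.fderiv_right (m := 1) le_rfl).differentiable one_ne_zero p).hasFDerivAt
  have hslice_fst : ∀ x y, fderiv ℝ (fun x' => H (x', y)) x = fderiv ℝ H (x, y) ∘L inl ℝ E F :=
    fun x y => ((hH.differentiable two_ne_zero (x, y)).hasFDerivAt.comp x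
      (hasFDerivAt_prodMk_left x y)).fderiv
  have hslice_snd : ∀ x y, fderiv ℝ (fun y' => H (x, y')) y = fderiv ℝ H (x, y) ∘L inr ℝ E F :=
    fun x y => ((hH.differentiable two_ne_zero (x, y)).hasFDerivAt.comp y
      (hasFDerivAt_prodMk_right x y)).fderiv
  -- `x' ↦ ∂₂H (x', y₀) v` vanishes identically, so its derivative, a mixed partial, vanishes.
  have hmixed : ∀ u v, D (x, y₀) (u, 0) (0, v) = 0 := by
    intro u v
    have hderiv : HasFDerivAt (fun x' => fderiv ℝ H (x', y₀) (0, v))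
        (apply ℝ G ((0 : E), v) ∘L D (x, y₀) ∘L inl ℝ E F) x :=
      (apply ℝ G ((0 : E), v)).hasFDerivAt.comp x
        ((hH' (x, y₀)).comp x (hasFDerivAt_prodMk_left x y₀))
    have hconst : (fun x' => fderiv ℝ H (x', y₀) (0, v)) = fun _ => 0 := by
      funext x'
      simpa [hslice_snd] using congr($(hsnd x') v)
    rw [hconst] at hderiv
    simpa using congr($((hasFDerivAt_const (0 : G) x).unique hderiv) u).symm
  have hsymm : IsSymmSndFDerivAt ℝ H (x, y₀) := hH.contDiffAt.isSymmSndFDerivAt (by simp)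
  have hderiv : HasFDerivAt (fun y => fderiv ℝ H (x, y) ∘L inl ℝ E F)
      ((compL ℝ E (E × F) G).flip (inl ℝ E F) ∘L D (x, y₀) ∘L inr ℝ E F) y₀ :=
    ((compL ℝ E (E × F) G).flip (inl ℝ E F)).hasFDerivAt.comp y₀
      ((hH' (x, y₀)).comp y₀ (hasFDerivAt_prodMk_right x y₀))
  simp_rw [hslice_fst]
  refine hderiv.congr_fderiv ?_
  ext v u
  simpa using (hsymm.eq (0, v) (u, 0)).trans (hmixed u v)

end MixedPartials

section HamiltonianVector

variable {ι : Type*} [Fintype ι] [DecidableEq ι]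

noncomputable def Matrix.hamiltonianVectorCLM (J : Matrix ι ι ℝ) :
    StrongDual ℝ (EuclideanSpace ℝ ι) →L[ℝ] EuclideanSpace ℝ ι :=
  Matrix.toEuclideanCLM (𝕜 := ℝ) J ∘L
    (InnerProductSpace.toDual ℝ (EuclideanSpace ℝ ι)).symm.toLinearIsometry.toContinuousLinearMap

theorem Matrix.hamiltonianVectorCLM_fderiv (J : Matrix ι ι ℝ) (f : EuclideanSpace ℝ ι → ℝ)
    (x : EuclideanSpace ℝ ι) :
    J.hamiltonianVectorCLM (fderiv ℝ f x) = (EuclideanSpace.equiv ι ℝ).symm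
      (J.mulVec (EuclideanSpace.equiv ι ℝ (gradient f x))) :=
  rfl

theorem Matrix.hamiltonianVectorCLM_injective {J : Matrix ι ι ℝ} (hJ : IsUnit J) :
    Function.Injective J.hamiltonianVectorCLM := fun _ _ h =>
  (InnerProductSpace.toDual ℝ _).symm.injective <| (EuclideanSpace.equiv ι ℝ).injective <|
    Matrix.mulVec_injective_iff_isUnit.mpr hJ <| (EuclideanSpace.equiv ι ℝ).symm.injective h

end HamiltonianVector

/-- For a C² Hamiltonian `H : ℝ² × ℝ² → ℝ`, with `J = [[0,−1],[−1,0]]`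
and Hamiltonian component fields `g₋ = J∇_{z₋}H`, `g₊ = J∇_{z₊}H`, if the plane
`{z₊ = 0}` is invariant (`g₊(z₋, 0) = 0` for all `z₋`), then the Jacobian block
`D_{z₊}g₋` vanishes at every point `(z₋, 0)`. -/
theorem hamiltonian_block_diagonal_structure
    (H : EuclideanSpace ℝ (Fin 2) × EuclideanSpace ℝ (Fin 2) → ℝ)
    (hH : ContDiff ℝ 2 H)
    (J : Matrix (Fin 2) (Fin 2) ℝ) (hJ : J = !![0, -1; -1, 0])
    (gm gp : EuclideanSpace ℝ (Fin 2) × EuclideanSpace ℝ (Fin 2) → EuclideanSpace ℝ (Fin 2))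
    (hgm : ∀ p, gm p
      = (EuclideanSpace.equiv (Fin 2) ℝ).symm
          (J.mulVec (EuclideanSpace.equiv (Fin 2) ℝ
            (gradient (fun w => H (w, p.2)) p.1))))
    (hgp : ∀ p, gp p
      = (EuclideanSpace.equiv (Fin 2) ℝ).symm
          (J.mulVec (EuclideanSpace.equiv (Fin 2) ℝ
            (gradient (fun w => H (p.1, w)) p.2))))
    (hinv : ∀ zm : EuclideanSpace ℝ (Fin 2), gp (zm, 0) = 0) :
    ∀ zm : EuclideanSpace ℝ (Fin 2),
      fderiv ℝ (fun w => gm (zm, w)) 0 = 0 := by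
  intro zm
  have hJunit : IsUnit J := by
    simp [Matrix.isUnit_iff_isUnit_det, hJ, Matrix.det_fin_two_of]
  have hslice : ∀ z, fderiv ℝ (fun w => H (z, w)) 0 = 0 := fun z =>
    Matrix.hamiltonianVectorCLM_injective hJunit <| by
      rw [Matrix.hamiltonianVectorCLM_fderiv, ← hgp (z, 0), hinv, map_zero]
  have hgm' : (fun w => gm (zm, w)) =
      fun w => J.hamiltonianVectorCLM (fderiv ℝ (fun u => H (u, w)) zm) :=
    funext fun w => hgm (zm, w)
  rw [hgm']
  exact (J.hamiltonianVectorCLM.hasFDerivAt.comp 0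
    (hH.hasFDerivAt_fderiv_fst_zero_of_fderiv_snd_eq_zero hslice zm)).fderiv.trans (comp_zero _)
end
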